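/- arXiv:2505.09988 — 3 statements merged into one kernel-verified Lean document; each statement's English description precedes it below -/
import Mathlib

section
/- Let ζ' > 0, τ' ≥ 0, β > 0, v ≥ 0, v_L ≥ 0, β_L > 0, and suppose z ≥ max(ζ', Φ'(v, v_L)) where Φ'(v, v_L) = ζ' - v_L²/(2β_L) + v·τ'/2 + v²/(2β). Define the projected braking distance B̃ = z - Φ'(v, v_L) + v²/(2β) and the comfort-braking acceleration a = -v²/(2B̃) (with a = 0 when v = 0). Then -β ≤ a ≤ 0. -/
/-! Since `Φ'(v, v_L) ≤ z`, the projected braking distance satisfies `B̃ ≥ v²/(2β)`, and the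
deceleration `v²/(2B̃)` needed to stop within a distance `B̃ ≥ v²/(2β)` is at most `β`. -/

theorem sq_div_two_mul_le {β B v : ℝ} (hβ : 0 < β) (hB : v ^ 2 / (2 * β) ≤ B) :
    v ^ 2 / (2 * B) ≤ β := by
  rcases eq_or_ne v 0 with rfl | hv
  · simpa using hβ.le
  have hB_pos : 0 < B := lt_of_lt_of_le (by positivity) hB
  rw [div_le_iff₀ (by positivity)]
  rw [div_le_iff₀ (by positivity)] at hB
  linarith

theorem neg_sq_div_two_mul_mem_Icc {β B v : ℝ} (hβ : 0 < β) (hB : v ^ 2 / (2 * β) ≤ B) :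
    -v ^ 2 / (2 * B) ∈ Set.Icc (-β) 0 := by
  have hB_nonneg : 0 ≤ B := le_trans (by positivity) hB
  rw [neg_div]
  exact ⟨neg_le_neg (sq_div_two_mul_le hβ hB), neg_nonpos.mpr (by positivity)⟩

theorem stmt_9_general (ζ' τ' β β_L v v_L z : ℝ) (hβ : 0 < β)
    (hz : max ζ' (ζ' - v_L ^ 2 / (2 * β_L) + v * (τ' / 2) + v ^ 2 / (2 * β)) ≤ z) :
    -β ≤ (if v = 0 then (0:ℝ) else
        -v ^ 2 / (2 * (z - (ζ' - v_L ^ 2 / (2 * β_L) + v * (τ' / 2) + v ^ 2 / (2 * β))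
          + v ^ 2 / (2 * β)))) ∧
    (if v = 0 then (0:ℝ) else
        -v ^ 2 / (2 * (z - (ζ' - v_L ^ 2 / (2 * β_L) + v * (τ' / 2) + v ^ 2 / (2 * β))
          + v ^ 2 / (2 * β)))) ≤ 0 := by
  split_ifs
  · exact ⟨neg_nonpos.mpr hβ.le, le_rfl⟩
  · have hΦ := le_of_max_le_right hz
    exact neg_sq_div_two_mul_mem_Icc hβ (by linarith)

theorem stmt_9 (ζ' τ' β β_L v v_L z : ℝ) (hζ' : 0 < ζ') (hτ : 0 ≤ τ') (hβ : 0 < β)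
    (hβL : 0 < β_L) (hv : 0 ≤ v) (hvL : 0 ≤ v_L)
    (hz : max ζ' (ζ' - v_L ^ 2 / (2 * β_L) + v * (τ' / 2) + v ^ 2 / (2 * β)) ≤ z) :
    -β ≤ (if v = 0 then (0:ℝ) else
        -v ^ 2 / (2 * (z - (ζ' - v_L ^ 2 / (2 * β_L) + v * (τ' / 2) + v ^ 2 / (2 * β))
          + v ^ 2 / (2 * β)))) ∧
    (if v = 0 then (0:ℝ) else
        -v ^ 2 / (2 * (z - (ζ' - v_L ^ 2 / (2 * β_L) + v * (τ' / 2) + v ^ 2 / (2 * β))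
          + v ^ 2 / (2 * β)))) ≤ 0 :=
  stmt_9_general ζ' τ' β β_L v v_L z hβ hz
end

section
/- Let τ' > 0 and C > 0. For the solution v(t) of v' = -v/(τ' + C v) with v(0) = v₀ > 0, the jerk da/dt along the trajectory equals τ'·v / (τ' + C v)³, which is strictly positive whenever v > 0; hence the acceleration a(t) = -v(t)/(τ' + C v(t)) is strictly increasing in time (deceleration magnitude monotonically decreases). -/
lemma strictMonoOn_of_hasDerivAt_pos {D : Set ℝ} (hD : Convex ℝ D) {f f' : ℝ → ℝ}
    (hf : ∀ x ∈ D, HasDerivAt f (f' x) x) (hf'₀ : ∀ x ∈ D, 0 < f' x) : StrictMonoOn f D :=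
  strictMonoOn_of_hasDerivWithinAt_pos hD (fun x hx ↦ (hf x hx).continuousAt.continuousWithinAt)
    (fun x hx ↦ (hf x (interior_subset hx)).hasDerivWithinAt)
    (fun x hx ↦ hf'₀ x (interior_subset hx))

lemma hasDerivAt_neg_div_affine {τ' C x : ℝ} (hx : τ' + C * x ≠ 0) :
    HasDerivAt (fun y ↦ -y / (τ' + C * y)) (-τ' / (τ' + C * x) ^ 2) x := by
  have hnum : HasDerivAt (fun y : ℝ ↦ -y) (-1) x := (hasDerivAt_id x).neg
  have hden : HasDerivAt (fun y ↦ τ' + C * y) C x := by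
    simpa using ((hasDerivAt_id x).const_mul C).const_add τ'
  exact (hnum.div hden hx).congr_deriv (by ring)

lemma hasDerivAt_decel_comp_of_ode {τ' C t : ℝ} {v : ℝ → ℝ}
    (hv : HasDerivAt v (-(v t) / (τ' + C * v t)) t) (hden : τ' + C * v t ≠ 0) :
    HasDerivAt (fun s ↦ -(v s) / (τ' + C * v s)) (τ' * v t / (τ' + C * v t) ^ 3) t := by
  refine ((hasDerivAt_neg_div_affine hden).comp t hv).congr_deriv ?_
  field_simp

theorem stmt_12_general (τ' C : ℝ) (hτ : 0 < τ') (hC : 0 < C)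
    (v : ℝ → ℝ)
    (hode : ∀ t ≥ (0:ℝ), HasDerivAt v (-(v t) / (τ' + C * v t)) t)
    (hpos : ∀ t ≥ (0:ℝ), 0 < v t) :
    (∀ t ≥ (0:ℝ),
      HasDerivAt (fun s => -(v s) / (τ' + C * v s))
        (τ' * v t / (τ' + C * v t) ^ 3) t ∧
      0 < τ' * v t / (τ' + C * v t) ^ 3) ∧
    StrictMonoOn (fun s => -(v s) / (τ' + C * v s)) (Set.Ici 0) := by
  have hjerk_pos : ∀ t ≥ (0:ℝ), 0 < τ' * v t / (τ' + C * v t) ^ 3 := fun t ht ↦ by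
    have := hpos t ht
    positivity
  have hjerk : ∀ t ≥ (0:ℝ), HasDerivAt (fun s => -(v s) / (τ' + C * v s))
      (τ' * v t / (τ' + C * v t) ^ 3) t := fun t ht ↦ by
    have := hpos t ht
    exact hasDerivAt_decel_comp_of_ode (hode t ht) (by positivity)
  exact ⟨fun t ht ↦ ⟨hjerk t ht, hjerk_pos t ht⟩,
    strictMonoOn_of_hasDerivAt_pos (convex_Ici 0) hjerk hjerk_pos⟩

theorem stmt_12 (τ' C v0 : ℝ) (hτ : 0 < τ') (hC : 0 < C) (hv0 : 0 < v0)
    (v : ℝ → ℝ) (hinit : v 0 = v0)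
    (hode : ∀ t ≥ (0:ℝ), HasDerivAt v (-(v t) / (τ' + C * v t)) t)
    (hpos : ∀ t ≥ (0:ℝ), 0 < v t) :
    (∀ t ≥ (0:ℝ),
      HasDerivAt (fun s => -(v s) / (τ' + C * v s))
        (τ' * v t / (τ' + C * v t) ^ 3) t ∧
      0 < τ' * v t / (τ' + C * v t) ^ 3) ∧
    StrictMonoOn (fun s => -(v s) / (τ' + C * v s)) (Set.Ici 0) :=
  stmt_12_general τ' C hτ hC v hode hpos
end

section
/- Let β_L > 0, β > β_L, τ' ≥ 0, v ≥ 0, v_L ≥ 0 with τ' + v/β ≥ v_L/β_L and v ≥ v_L. Then the follower's projected braking speed profile u(s) (constant v on [0, τ'], then decreasing at rate β to zero) pointwise dominates the leader's profile u_L(s) = max(0, v_L - β_L s) for all s ≥ 0; hence the projected spacing is non-increasing in s and its infimum over s ≥ 0 equals the projected stopping spacing z̃ = z - vτ' + v_L²/(2β_L) - v²/(2β) ≤ z. -/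
/-!
The follower's speed profile dominates the leader's: before the follower brakes it drives at
`v ≥ v_L`, and afterwards the gap between the two ramps shrinks linearly (as `β > β_L`) until the
leader stops, which by `v_L / β_L ≤ τ' + v / β` happens no later than the follower's own stop.
Hence the spacing `z + ∫₀ˢ (u_L - u)` is antitone, and constant once both vehicles have stopped at
`T = τ' + v / β`, where its value is computed from the areas `v_L² / (2 β_L)` and
`v τ' + v² / (2 β)` under the two profiles.
-/

open Set Filter Topology intervalIntegral

section SpacingIntegral

variable {f : ℝ → ℝ} {a T : ℝ}

lemma antitoneOn_integral_of_nonpos (hf : Continuous f) (hneg : ∀ x ≥ a, f x ≤ 0) :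
    AntitoneOn (fun s => ∫ x in a..s, f x) (Ici a) := by
  intro s hs t _ hst
  dsimp only
  rw [← integral_add_adjacent_intervals (hf.intervalIntegrable a s) (hf.intervalIntegrable s t)]
  have htail : ∫ x in s..t, f x ≤ 0 := by
    simpa using integral_mono_on hst (hf.intervalIntegrable s t) intervalIntegrable_const
      fun x hx => hneg x (le_trans hs hx.1)
  linarith

lemma integral_eq_of_eq_zero_of_ge (hf : Continuous f) (hzero : ∀ x ≥ T, f x = 0) {s : ℝ}
    (hs : T ≤ s) : ∫ x in a..s, f x = ∫ x in a..T, f x := by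
  rw [← integral_add_adjacent_intervals (hf.intervalIntegrable a T) (hf.intervalIntegrable T s)]
  have htail : ∫ x in T..s, f x = 0 := by
    rw [integral_congr (g := fun _ => 0) fun x hx => hzero x (uIcc_of_le hs ▸ hx).1]
    exact integral_zero
  rw [htail, add_zero]

lemma tendsto_integral_of_eq_zero_of_ge (hf : Continuous f) (hzero : ∀ x ≥ T, f x = 0) :
    Tendsto (fun s => ∫ x in a..s, f x) atTop (𝓝 (∫ x in a..T, f x)) :=
  tendsto_const_nhds.congr' <| (eventually_ge_atTop T).mono fun _ hs =>
    (integral_eq_of_eq_zero_of_ge hf hzero hs).symm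

lemma integral_le_integral_of_nonpos_of_eq_zero (hf : Continuous f) (hneg : ∀ x ≥ a, f x ≤ 0)
    (hzero : ∀ x ≥ T, f x = 0) (haT : a ≤ T) {s : ℝ} (hs : a ≤ s) :
    ∫ x in a..T, f x ≤ ∫ x in a..s, f x := by
  rcases le_total T s with hTs | hsT
  · exact (integral_eq_of_eq_zero_of_ge hf hzero hTs).ge
  · exact antitoneOn_integral_of_nonpos hf hneg hs haT hsT

end SpacingIntegral

lemma max_zero_sub_mul_eq_zero {a b r : ℝ} (hb : 0 < b) (hr : a / b ≤ r) :
    max 0 (a - b * r) = 0 :=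
  max_eq_left (by linarith [(div_le_iff₀' hb).1 hr])

lemma integral_max_zero_sub_mul {a b T : ℝ} (hb : 0 < b) (ha : 0 ≤ a) (hT : a / b ≤ T) :
    ∫ r in (0:ℝ)..T, max 0 (a - b * r) = a ^ 2 / (2 * b) := by
  rw [integral_eq_of_eq_zero_of_ge (by fun_prop) (fun r => max_zero_sub_mul_eq_zero hb) hT,
    integral_congr (g := fun r => a - b * r) fun r hr => max_eq_right
      (by linarith [(le_div_iff₀' hb).1 (uIcc_of_le (div_nonneg ha hb.le) ▸ hr).2])]
  rw [integral_sub intervalIntegrable_const (intervalIntegrable_id.const_mul b),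
    integral_const_mul, integral_id, integral_const, smul_eq_mul]
  field_simp
  ring

noncomputable def projectedSpeed (v β τ s : ℝ) : ℝ :=
  if s ≤ τ then v else max 0 (v - β * (s - τ))

section ProjectedSpeed

variable {v β τ s : ℝ}

lemma projectedSpeed_of_le (hs : s ≤ τ) : projectedSpeed v β τ s = v := if_pos hs

lemma projectedSpeed_of_ge (hv : 0 ≤ v) (hs : τ ≤ s) :
    projectedSpeed v β τ s = max 0 (v - β * (s - τ)) := by
  unfold projectedSpeed
  split_ifs with h
  · rw [le_antisymm h hs, sub_self, mul_zero, sub_zero, max_eq_right hv]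
  · rfl

lemma projectedSpeed_nonneg (hv : 0 ≤ v) : 0 ≤ projectedSpeed v β τ s := by
  unfold projectedSpeed
  split_ifs
  exacts [hv, le_max_left _ _]

lemma projectedSpeed_eq_zero (hβ : 0 < β) (hv : 0 ≤ v) (hs : τ + v / β ≤ s) :
    projectedSpeed v β τ s = 0 := by
  have hvβ : v ≤ β * (s - τ) := (div_le_iff₀' hβ).1 (by linarith)
  rw [projectedSpeed_of_ge hv (by linarith [div_nonneg hv hβ.le]), max_eq_left (by linarith)]

lemma continuous_projectedSpeed (hv : 0 ≤ v) : Continuous (projectedSpeed v β τ) :=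
  Continuous.if_le continuous_const (by fun_prop) continuous_id continuous_const
    fun s hs => by rw [hs, sub_self, mul_zero, sub_zero, max_eq_right hv]

lemma integral_projectedSpeed (hβ : 0 < β) (hv : 0 ≤ v) (hτ : 0 ≤ τ) :
    ∫ s in (0:ℝ)..τ + v / β, projectedSpeed v β τ s = v * τ + v ^ 2 / (2 * β) := by
  have hu := continuous_projectedSpeed (β := β) (τ := τ) hv
  have hτT : τ ≤ τ + v / β := le_add_of_nonneg_right (div_nonneg hv hβ.le)
  rw [← integral_add_adjacent_intervals (hu.intervalIntegrable 0 τ) (hu.intervalIntegrable τ _),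
    integral_congr (g := fun _ => v) fun s hs => projectedSpeed_of_le (uIcc_of_le hτ ▸ hs).2,
    integral_congr (g := fun s => max 0 (v - β * (s - τ))) fun s hs =>
      projectedSpeed_of_ge hv (uIcc_of_le hτT ▸ hs).1,
    integral_comp_sub_right (fun s => max 0 (v - β * s)), sub_self, add_sub_cancel_left,
    integral_max_zero_sub_mul hβ hv le_rfl, integral_const, smul_eq_mul, sub_zero, mul_comm]

lemma max_zero_sub_mul_le_projectedSpeed {v_L β_L : ℝ} (hβL : 0 < β_L) (hβ : β_L ≤ β)
    (hv0 : 0 ≤ v) (hv : v_L ≤ v) (hstop : v_L / β_L ≤ τ + v / β) (hs : 0 ≤ s) :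
    max 0 (v_L - β_L * s) ≤ projectedSpeed v β τ s := by
  refine max_le (projectedSpeed_nonneg hv0) ?_
  rcases le_or_gt (v_L - β_L * s) 0 with hstopped | hmoving
  · exact hstopped.trans (projectedSpeed_nonneg hv0)
  rcases le_total s τ with hsτ | hτs
  · rw [projectedSpeed_of_le hsτ]
    linarith [mul_nonneg hβL.le hs]
  · rw [projectedSpeed_of_ge hv0 hτs]
    refine le_max_of_le_right ?_
    have hsT : s ≤ τ + v / β := by
      linarith [(lt_div_iff₀' hβL).2 (by linarith : β_L * s < v_L)]
    have hβT : β * (τ + v / β) = β * τ + v := by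
      rw [mul_add, mul_div_cancel₀ v (hβL.trans_le hβ).ne']
    linarith [(div_le_iff₀' hβL).1 hstop, mul_le_mul_of_nonneg_left hsT (sub_nonneg.2 hβ)]

end ProjectedSpeed

theorem stmt_16 (β β_L τ' v v_L z : ℝ) (hβL : 0 < β_L) (hβ : β_L < β)
    (hτ : 0 ≤ τ') (hvL : 0 ≤ v_L) (hv : v_L ≤ v)
    (hstop : v_L / β_L ≤ τ' + v / β) :
    (∀ s ≥ (0:ℝ),
      max 0 (v_L - β_L * s) ≤ (if s ≤ τ' then v else max 0 (v - β * (s - τ')))) ∧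
    AntitoneOn
      (fun s => z + ∫ r in (0:ℝ)..s,
        (max 0 (v_L - β_L * r) - (if r ≤ τ' then v else max 0 (v - β * (r - τ')))))
      (Set.Ici 0) ∧
    Filter.Tendsto
      (fun s => z + ∫ r in (0:ℝ)..s,
        (max 0 (v_L - β_L * r) - (if r ≤ τ' then v else max 0 (v - β * (r - τ')))))
      Filter.atTop
      (nhds (z - v * τ' + v_L ^ 2 / (2 * β_L) - v ^ 2 / (2 * β))) ∧
    (∀ s ≥ (0:ℝ),
      z - v * τ' + v_L ^ 2 / (2 * β_L) - v ^ 2 / (2 * β) ≤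
        z + ∫ r in (0:ℝ)..s,
          (max 0 (v_L - β_L * r) - (if r ≤ τ' then v else max 0 (v - β * (r - τ'))))) ∧
    z - v * τ' + v_L ^ 2 / (2 * β_L) - v ^ 2 / (2 * β) ≤ z := by
  have hβ0 : 0 < β := hβL.trans hβ
  have hv0 : 0 ≤ v := hvL.trans hv
  set T := τ' + v / β
  have hT : 0 ≤ T := by positivity
  set f : ℝ → ℝ := fun r => max 0 (v_L - β_L * r) - projectedSpeed v β τ' r
  have hdom : ∀ s ≥ (0:ℝ), max 0 (v_L - β_L * s) ≤ projectedSpeed v β τ' s := fun s hs =>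
    max_zero_sub_mul_le_projectedSpeed hβL hβ.le hv0 hv hstop hs
  have hf : Continuous f := by
    have := continuous_projectedSpeed (β := β) (τ := τ') hv0
    fun_prop
  have hneg : ∀ r ≥ (0:ℝ), f r ≤ 0 := fun r hr => sub_nonpos.2 (hdom r hr)
  have hzero : ∀ r ≥ T, f r = 0 := fun r hr => by
    simp only [f, projectedSpeed_eq_zero hβ0 hv0 hr, max_zero_sub_mul_eq_zero hβL (hstop.trans hr),
      sub_self]
  have hfinal :
      z - v * τ' + v_L ^ 2 / (2 * β_L) - v ^ 2 / (2 * β) = z + ∫ r in (0:ℝ)..T, f r := by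
    rw [integral_sub ((by fun_prop : Continuous _).intervalIntegrable _ _)
      ((continuous_projectedSpeed hv0).intervalIntegrable _ _),
      integral_max_zero_sub_mul hβL hvL hstop, integral_projectedSpeed hβ0 hv0 hτ]
    ring
  rw [hfinal]
  refine ⟨hdom, fun s hs t ht hst => ?_, (tendsto_integral_of_eq_zero_of_ge hf hzero).const_add z,
    fun s hs => ?_, ?_⟩
  · exact (add_le_add_iff_left z).2 (antitoneOn_integral_of_nonpos hf hneg hs ht hst)
  · exact (add_le_add_iff_left z).2
      (integral_le_integral_of_nonpos_of_eq_zero hf hneg hzero hT hs)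
  · simpa using antitoneOn_integral_of_nonpos hf hneg (mem_Ici.2 le_rfl) hT hT
end
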